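/- If w ∈ W̃ is written as w = s₁·s₂⋯s_r·u with s₁,…,s_r ∈ S, u ∈ Ω and r = ℓ(w) (a reduced decomposition), then q_w = q_{s₁}·q_{s₂}⋯q_{s_r}. -/

import Mathlib

open scoped Pointwise

/-! ## Setting

`G` is a group with subgroups `I` and `N` such that `T := I ⊓ N` is normal in `N`, and
`W̃ := N/T` is presented via a surjective homomorphism `π : N →* W̃` whose kernel consists of
the elements of `N` lying in `I`.  `W̃ = W_aff ⋊ Ω` is an internal semidirect product, where
`W_aff` carries a Coxeter system `cs` (with simple reflections indexed by `B`), the length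
function `ℓ` of `cs` is extended to `W̃` by `ℓ (w * u) = ℓ w` for `w ∈ W_aff`, `u ∈ Ω`, and
the axioms (T0), (T3), (T4), (TΩ), (TS), (TF) hold. -/

/-- The double coset `I·n·I ⊆ G` attached to an element `w ∈ W̃ = N/T`, described as the union
of `I·n·I` over all representatives `n ∈ N` of `w` (these double cosets all coincide, since any
two representatives differ by an element of `T = I ⊓ N ⊆ I`). -/
def IwI {G : Type} [Group G] {W : Type} [Group W] (I : Subgroup G) {N : Subgroup G}
    (π : N →* W) (w : W) : Set G :=
  {g : G | ∃ n : N, π n = w ∧ ∃ i ∈ I, ∃ j ∈ I, g = i * (n : G) * j}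

/-- The basis element `i_w = 1_{IwI} : G → ℤ` of the Iwahori–Hecke ring. -/
noncomputable def iw {G : Type} [Group G] {W : Type} [Group W] (I : Subgroup G) {N : Subgroup G}
    (π : N →* W) (w : W) : G → ℤ :=
  (IwI I π w).indicator fun _ => (1 : ℤ)

/-- Convolution of `ℤ`-valued functions on `G` relative to `I`:
`(f ⋆ f')(x) = Σ_{yI ∈ G/I} f(y)·f'(y⁻¹x)` (the value of `f` at a left coset `yI` is computed
at a chosen representative; this is independent of the choices when `f` is right `I`-invariant
and `f'` is left `I`-invariant). -/
noncomputable def hconv {G : Type} [Group G] (I : Subgroup G) (f f' : G → ℤ) : G → ℤ :=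
  fun x => ∑ᶠ y : G ⧸ I, f (Quotient.out y) * f' ((Quotient.out y)⁻¹ * x)

/-- The left cosets of `I` contained in a (right `I`-stable) subset `A ⊆ G`, viewed as the
image of `A` in `G/I`. -/
def leftCosetsIn {G : Type} [Group G] (I : Subgroup G) (A : Set G) : Set (G ⧸ I) :=
  QuotientGroup.mk '' A

/-- A function `f : G → ℤ` belongs to the Iwahori–Hecke ring `H(G,I)` iff it is left and right
`I`-invariant and vanishes outside finitely many double cosets of `I`. -/
def IsHeckeElt {G : Type} [Group G] {W : Type} [Group W] (I : Subgroup G) {N : Subgroup G}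
    (π : N →* W) (f : G → ℤ) : Prop :=
  (∀ i ∈ I, ∀ g : G, f (i * g) = f g) ∧ (∀ i ∈ I, ∀ g : G, f (g * i) = f g) ∧
    {w : W | ∃ g ∈ IwI I π w, f g ≠ 0}.Finite

/-- The data and axioms of the Iwahori–Matsumoto setting. -/
structure IwahoriHeckeSetup (G W B : Type) [Group G] [Group W] (M : CoxeterMatrix B) where
  /-- the "Iwahori" subgroup -/
  I : Subgroup G
  /-- the subgroup `N` -/
  N : Subgroup G
  /-- the quotient map `N → W̃ = N/T`, `T = I ∩ N` -/
  π : N →* W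
  π_surjective : Function.Surjective π
  /-- the kernel of `π` is exactly `T = I ∩ N` (so `T` is normal in `N` and `W̃ = N/T`) -/
  π_ker : ∀ n : N, π n = 1 ↔ (n : G) ∈ I
  /-- the normal subgroup `W_aff` of `W̃` -/
  Waff : Subgroup W
  /-- the subgroup `Ω` of `W̃` -/
  Om : Subgroup W
  Waff_normal : Waff.Normal
  /-- `W̃ = W_aff · Ω` -/
  sd_prod : ∀ w : W, ∃ wa ∈ Waff, ∃ u ∈ Om, w = wa * u
  /-- `W_aff ∩ Ω = 1` -/
  sd_disj : Waff ⊓ Om = ⊥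
  /-- the Coxeter system `(W_aff, S)`, `S = {simple b | b : B}` -/
  cs : CoxeterSystem M Waff
  /-- the length function of `(W_aff, S)`, extended to `W̃` -/
  len : W → ℕ
  len_spec : ∀ (wa : Waff) (u : Om), len ((wa : W) * (u : W)) = cs.length wa
  /-- `q w` = the number of left cosets of `I` contained in `IwI` -/
  q : W → ℕ
  /-- (T0): `G` is covered by the double cosets `IwI`, `w ∈ W̃` ... -/
  T0_cover : ∀ g : G, ∃ w : W, g ∈ IwI I π w
  /-- (T0): ... and distinct double cosets are disjoint -/
  T0_disjoint : ∀ w w' : W, w ≠ w' → Disjoint (IwI I π w) (IwI I π w')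
  /-- (T3): `sIw ⊆ IwI ∪ IswI` for all `s ∈ S`, `w ∈ W̃` -/
  T3 : ∀ (b : B) (w : W) (ns nw : N), π ns = (cs.simple b : W) → π nw = w →
      ∀ i ∈ I, (ns : G) * i * (nw : G) ∈ IwI I π w ∪ IwI I π ((cs.simple b : W) * w)
  /-- (T4): `sIs ⊄ I` for all `s ∈ S` -/
  T4 : ∀ (b : B) (ns ns' : N), π ns = (cs.simple b : W) → π ns' = (cs.simple b : W) →
      ¬ (∀ i ∈ I, (ns : G) * i * (ns' : G) ∈ I)
  /-- (TΩ): representatives in `N` of elements of `Ω` normalize `I` -/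
  TOm : ∀ n : N, π n ∈ Om → ∀ i ∈ I, (n : G) * i * (n : G)⁻¹ ∈ I
  /-- (TS): `uSu⁻¹ = S` for all `u ∈ Ω` -/
  TS : ∀ u ∈ Om, ∀ b : B, ∃ b' : B, u * (cs.simple b : W) * u⁻¹ = (cs.simple b' : W)
  /-- (TF): every double coset `IwI` is a finite union of left cosets of `I`, and `q w` is
  their number -/
  TF : ∀ w : W, (leftCosetsIn I (IwI I π w)).Finite ∧
      q w = (leftCosetsIn I (IwI I π w)).ncard


/-! For a simple reflection `s` and `v = w·u` with `w ∈ W_aff`, `u ∈ Ω` and `ℓ(sw) = ℓ(w) + 1`,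
the product `IsI·IvI` is the single double coset `IsvI`: by (T3) it lies in `IvI ∪ IsvI`, and it
misses `IvI` by induction on `ℓ(w)`, splitting off a right descent `t` of `w` and applying (T3)
to `IsI·(IwI·ItI)`. Since moreover `IsI·IsI ⊆ I ∪ IsI`, the map `(aI, bI) ↦ abI` from pairs of
left cosets in `IsI` and `IvI` to left cosets in `IsvI` is a bijection, so `q_{sv} = q_s·q_v`.
Finally `q_u = 1` for `u ∈ Ω`, because a representative of `u` normalizes `I`. -/

theorem ncard_leftCosetsIn_mul {G : Type} [Group G] (I : Subgroup G) {A B : Set G}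
    (hA : ∀ a ∈ A, ∀ i ∈ I, a * i ∈ A) (hB : ∀ i ∈ I, ∀ b ∈ B, i * b ∈ B)
    (hB' : ∀ b ∈ B, ∀ i ∈ I, b * i ∈ B)
    (hsep : ∀ a ∈ A, ∀ a' ∈ A, ∀ b ∈ B, a⁻¹ * a' * b ∈ B → a⁻¹ * a' ∈ I) :
    (leftCosetsIn I (A * B)).ncard = (leftCosetsIn I A).ncard * (leftCosetsIn I B).ncard := by
  have out_mem : ∀ c ∈ leftCosetsIn I A, c.out ∈ A := by
    rintro _ ⟨a, ha, rfl⟩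
    obtain ⟨i, hi⟩ := QuotientGroup.mk_out_eq_mul I a
    exact hi ▸ hA a ha i i.2
  have hbij : Set.BijOn (fun p : (G ⧸ I) × (G ⧸ I) => p.1.out • p.2)
      (leftCosetsIn I A ×ˢ leftCosetsIn I B) (leftCosetsIn I (A * B)) := by
    refine ⟨?_, ?_, ?_⟩
    · rintro ⟨c, _⟩ ⟨hc, b, hb, rfl⟩
      exact ⟨c.out * b, Set.mul_mem_mul (out_mem c hc) hb, rfl⟩
    · rintro ⟨c, _⟩ ⟨hc, b, hb, rfl⟩ ⟨c', _⟩ ⟨hc', b', hb', rfl⟩ h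
      have hk := QuotientGroup.eq.mp h
      have hcc' : c = c' := by
        rw [← c.out_eq', ← c'.out_eq']
        refine QuotientGroup.eq.mpr (hsep _ (out_mem c hc) _ (out_mem c' hc') b' hb' ?_)
        simpa [mul_assoc] using hB' b hb _ hk
      subst hcc'
      exact Prod.ext rfl (QuotientGroup.eq.mpr (by simpa [mul_assoc] using hk))
    · rintro _ ⟨_, ⟨a, ha, b, hb, rfl⟩, rfl⟩
      obtain ⟨i, hi⟩ := QuotientGroup.mk_out_eq_mul I a
      refine ⟨(a, ((i⁻¹ * b : G) : G ⧸ I)), ⟨⟨a, ha, rfl⟩, _, hB _ (inv_mem i.2) b hb, rfl⟩, ?_⟩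
      simp [hi, mul_assoc]
  rw [← hbij.image_eq, hbij.injOn.ncard_image, Set.ncard_prod]

theorem CoxeterSystem.length_simple_mul_mul_simple {B W : Type} [Group W] {M : CoxeterMatrix B}
    (cs : CoxeterSystem M W) {w : W} {i j : B}
    (hlen : cs.length (cs.simple i * w) = cs.length w + 1) (hj : cs.IsRightDescent w j) :
    cs.length (cs.simple i * (w * cs.simple j)) = cs.length (w * cs.simple j) + 1 := by
  have hle := cs.length_mul_le (cs.simple i * (w * cs.simple j)) (cs.simple j)
  rw [mul_assoc, mul_assoc, cs.simple_mul_simple_self, mul_one, cs.length_simple, hlen] at hle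
  have := cs.isRightDescent_iff.mp hj
  rcases cs.length_simple_mul (w * cs.simple j) i with h | h <;> omega

namespace IwahoriHeckeSetup

variable {G W B : Type} [Group G] [Group W] {M : CoxeterMatrix B} (D : IwahoriHeckeSetup G W B M)

theorem coe_mem_IwI {w : W} (n : D.N) (hn : D.π n = w) : (n : G) ∈ IwI D.I D.π w :=
  ⟨n, hn, 1, one_mem _, 1, one_mem _, by group⟩

theorem mul_mem_IwI_of_mem_left {w : W} {i g : G} (hi : i ∈ D.I) (hg : g ∈ IwI D.I D.π w) :
    i * g ∈ IwI D.I D.π w := by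
  obtain ⟨n, hn, a, ha, b, hb, rfl⟩ := hg
  exact ⟨n, hn, i * a, mul_mem hi ha, b, hb, by group⟩

theorem mul_mem_IwI_of_mem_right {w : W} {g j : G} (hg : g ∈ IwI D.I D.π w) (hj : j ∈ D.I) :
    g * j ∈ IwI D.I D.π w := by
  obtain ⟨n, hn, a, ha, b, hb, rfl⟩ := hg
  exact ⟨n, hn, a, ha, b * j, mul_mem hb hj, by group⟩

theorem inv_IwI (w : W) : (IwI D.I D.π w)⁻¹ = IwI D.I D.π w⁻¹ := by
  suffices h : ∀ w : W, (IwI D.I D.π w)⁻¹ ⊆ IwI D.I D.π w⁻¹ by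
    refine (h w).antisymm ?_
    simpa using Set.inv_subset_inv.mpr (h w⁻¹)
  rintro w g ⟨n, hn, a, ha, b, hb, hg⟩
  exact ⟨n⁻¹, by rw [map_inv, hn], b⁻¹, inv_mem hb, a⁻¹, inv_mem ha, by
    rw [← inv_inv g, hg]; push_cast; group⟩

theorem IwI_one : IwI D.I D.π 1 = D.I := by
  ext g
  constructor
  · rintro ⟨n, hn, a, ha, b, hb, rfl⟩
    exact mul_mem (mul_mem ha ((D.π_ker n).mp hn)) hb
  · intro hg
    exact ⟨1, map_one _, g, hg, 1, one_mem _, by simp⟩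

theorem eq_of_mem_IwI {v w : W} {g : G} (hv : g ∈ IwI D.I D.π v) (hw : g ∈ IwI D.I D.π w) :
    v = w := by
  by_contra hne
  exact Set.disjoint_left.mp (D.T0_disjoint v w hne) hv hw

theorem IwI_mul_subset (v w : W) : IwI D.I D.π (v * w) ⊆ IwI D.I D.π v * IwI D.I D.π w := by
  rintro _ ⟨m, hm, i, hi, j, hj, rfl⟩
  obtain ⟨n, hn⟩ := D.π_surjective v
  have hrest : D.π (n⁻¹ * m) = w := by rw [map_mul, map_inv, hn, hm, inv_mul_cancel_left]
  exact ⟨i * n, D.mul_mem_IwI_of_mem_left hi (D.coe_mem_IwI n hn), _,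
    D.mul_mem_IwI_of_mem_right (D.coe_mem_IwI _ hrest) hj, by push_cast; group⟩

theorem IwI_mul_IwI_of_mem_Om (v : W) {u : W} (hu : u ∈ D.Om) :
    IwI D.I D.π v * IwI D.I D.π u = IwI D.I D.π (v * u) := by
  refine subset_antisymm ?_ (D.IwI_mul_subset v u)
  rintro _ ⟨_, ⟨m, hm, a, ha, c, hc, rfl⟩, _, ⟨n, hn, a', ha', c', hc', rfl⟩, rfl⟩
  have hconj : (n : G)⁻¹ * (c * a') * n ∈ D.I := by
    simpa using D.TOm n⁻¹ (by rw [map_inv, hn]; exact inv_mem hu) _ (mul_mem hc ha')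
  exact ⟨m * n, by rw [map_mul, hm, hn], a, ha, _, mul_mem hconj hc', by push_cast; group⟩

theorem q_of_mem_Om {u : W} (hu : u ∈ D.Om) : D.q u = 1 := by
  obtain ⟨n, hn⟩ := D.π_surjective u
  suffices h : leftCosetsIn D.I (IwI D.I D.π u) = {((n : G) : G ⧸ D.I)} by
    rw [(D.TF u).2, h, Set.ncard_singleton]
  refine Set.eq_singleton_iff_unique_mem.mpr ⟨⟨n, D.coe_mem_IwI n hn, rfl⟩, ?_⟩
  rintro _ ⟨g, hg, rfl⟩
  have h : (g : G)⁻¹ * n ∈ IwI D.I D.π (u⁻¹ * u) := by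
    rw [← D.IwI_mul_IwI_of_mem_Om _ hu, ← D.inv_IwI]
    exact Set.mul_mem_mul (Set.inv_mem_inv.mpr hg) (D.coe_mem_IwI n hn)
  rw [inv_mul_cancel, IwI_one] at h
  exact QuotientGroup.eq.mpr h

theorem inv_mem_IwI_iff {w : W} {g : G} : g⁻¹ ∈ IwI D.I D.π w ↔ g ∈ IwI D.I D.π w⁻¹ := by
  rw [← Set.mem_inv, inv_IwI]

theorem coe_simple_inv (b : B) : (D.cs.simple b : W)⁻¹ = D.cs.simple b := by
  rw [← Subgroup.coe_inv, D.cs.inv_simple]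

theorem coe_simple_ne_one (b : B) : (D.cs.simple b : W) ≠ 1 := by
  intro h
  have := D.cs.length_simple b
  rw [OneMemClass.coe_eq_one.mp h, D.cs.length_one] at this
  exact zero_ne_one this

theorem IwI_simple_mul_subset (b : B) (v : W) :
    IwI D.I D.π (D.cs.simple b) * IwI D.I D.π v ⊆
      IwI D.I D.π v ∪ IwI D.I D.π (D.cs.simple b * v) := by
  rintro _ ⟨_, ⟨ns, hns, a, ha, c, hc, rfl⟩, _, ⟨nv, hnv, a', ha', c', hc', rfl⟩, rfl⟩
  have key := D.T3 b v ns nv hns hnv (c * a') (mul_mem hc ha')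
  beta_reduce
  rw [show a * ns * c * (a' * nv * c') = a * (ns * (c * a') * nv) * c' by group]
  exact key.imp (fun h => D.mul_mem_IwI_of_mem_right (D.mul_mem_IwI_of_mem_left ha h) hc')
    (fun h => D.mul_mem_IwI_of_mem_right (D.mul_mem_IwI_of_mem_left ha h) hc')

theorem IwI_mul_simple_subset (v : W) (b : B) :
    IwI D.I D.π v * IwI D.I D.π (D.cs.simple b) ⊆
      IwI D.I D.π v ∪ IwI D.I D.π (v * D.cs.simple b) := by
  intro x hx
  have hx' : x⁻¹ ∈ IwI D.I D.π (D.cs.simple b) * IwI D.I D.π v⁻¹ := by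
    rw [← coe_simple_inv, ← inv_IwI, ← inv_IwI, ← mul_inv_rev]
    exact Set.inv_mem_inv.mpr hx
  have h := D.IwI_simple_mul_subset b v⁻¹ hx'
  rwa [Set.mem_union, inv_mem_IwI_iff, inv_mem_IwI_iff, inv_inv, mul_inv_rev, inv_inv,
    coe_simple_inv] at h

theorem disjoint_IwI_simple_mul {b : B} {wa : D.Waff}
    (hlen : D.cs.length (D.cs.simple b * wa) = D.cs.length wa + 1) :
    Disjoint (IwI D.I D.π (D.cs.simple b) * IwI D.I D.π wa) (IwI D.I D.π wa) := by
  induction hk : D.cs.length wa generalizing wa with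
  | zero =>
    rw [D.cs.length_eq_zero_iff.mp hk, OneMemClass.coe_one, IwI_one]
    refine Set.disjoint_left.mpr ?_
    rintro _ ⟨g, hg, i, hi, rfl⟩ hgi
    have hg1 : g ∈ IwI D.I D.π 1 := by
      simpa [IwI_one] using mul_mem hgi (inv_mem hi)
    exact D.coe_simple_ne_one b (D.eq_of_mem_IwI hg hg1)
  | succ k ih =>
    have hne : wa ≠ 1 := by rintro rfl; simp at hk
    obtain ⟨b₀, hdesc⟩ := D.cs.exists_rightDescent_of_ne_one hne
    have hlen' := D.cs.length_simple_mul_mul_simple hlen hdesc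
    have hdesc' := D.cs.isRightDescent_iff.mp hdesc
    set t := D.cs.simple b₀
    set wa' := wa * t
    have hk' : D.cs.length wa' = k := by omega
    refine Set.disjoint_left.mpr ?_
    rintro _ ⟨g, hg, h, hh, rfl⟩ ⟨m, hm, i, hi, j, hj, hgh⟩
    beta_reduce at hgh
    obtain ⟨nt, hnt⟩ := D.π_surjective t
    have hy : ((m * nt : D.N) : G) ∈ IwI D.I D.π wa' :=
      D.coe_mem_IwI _ (by rw [map_mul, hm, hnt]; rfl)
    have hsplit : ((m * nt : D.N) : G) = (i⁻¹ * g) * (h * j⁻¹ * nt) := by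
      push_cast; rw [show (m : G) = i⁻¹ * (g * h) * j⁻¹ by rw [hgh]; group]; group
    have hg' : i⁻¹ * g ∈ IwI D.I D.π (D.cs.simple b) := D.mul_mem_IwI_of_mem_left (inv_mem hi) hg
    rcases D.IwI_mul_simple_subset wa b₀ (Set.mul_mem_mul
      (D.mul_mem_IwI_of_mem_right hh (inv_mem hj)) (D.coe_mem_IwI nt hnt)) with hwa | hwa'
    · rcases D.IwI_simple_mul_subset b wa (hsplit ▸ Set.mul_mem_mul hg' hwa) with hy' | hy'
      · have := congrArg D.cs.length (Subtype.ext (D.eq_of_mem_IwI hy hy') : wa' = wa)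
        omega
      · have := congrArg D.cs.length
          (Subtype.ext (D.eq_of_mem_IwI hy hy') : wa' = D.cs.simple b * wa)
        omega
    · exact Set.disjoint_left.mp (ih hlen' hk') (hsplit ▸ Set.mul_mem_mul hg' hwa') hy

theorem IwI_simple_mul_IwI_of_length_eq {b : B} {wa : D.Waff}
    (hlen : D.cs.length (D.cs.simple b * wa) = D.cs.length wa + 1) {u : W} (hu : u ∈ D.Om) :
    IwI D.I D.π (D.cs.simple b) * IwI D.I D.π (wa * u) =
      IwI D.I D.π (D.cs.simple b * (wa * u)) := by
  have hwa : IwI D.I D.π (D.cs.simple b) * IwI D.I D.π wa =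
      IwI D.I D.π (D.cs.simple b * wa) := by
    refine subset_antisymm (fun x hx => ?_) (D.IwI_mul_subset _ _)
    exact (D.IwI_simple_mul_subset b wa hx).resolve_left
      (Set.disjoint_left.mp (D.disjoint_IwI_simple_mul hlen) hx)
  rw [← D.IwI_mul_IwI_of_mem_Om _ hu, ← mul_assoc, hwa, D.IwI_mul_IwI_of_mem_Om _ hu, mul_assoc]

theorem q_simple_mul {b : B} {v : W}
    (hprod : IwI D.I D.π (D.cs.simple b) * IwI D.I D.π v = IwI D.I D.π (D.cs.simple b * v))
    (hne : (D.cs.simple b : W) * v ≠ v) :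
    D.q (D.cs.simple b * v) = D.q (D.cs.simple b) * D.q v := by
  rw [(D.TF _).2, (D.TF _).2, (D.TF _).2, ← hprod]
  refine ncard_leftCosetsIn_mul D.I (fun _ ha _ hi => D.mul_mem_IwI_of_mem_right ha hi)
    (fun _ hi _ hc => D.mul_mem_IwI_of_mem_left hi hc)
    (fun _ hc _ hi => D.mul_mem_IwI_of_mem_right hc hi) ?_
  intro a ha a' ha' c hc hac
  have hss : (D.cs.simple b : W) * D.cs.simple b = 1 :=
    mul_eq_one_iff_eq_inv.mpr (D.coe_simple_inv b).symm
  have haa' := D.IwI_simple_mul_subset b (D.cs.simple b)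
    (Set.mul_mem_mul (D.inv_mem_IwI_iff.mpr (D.coe_simple_inv b ▸ ha)) ha')
  rw [hss, IwI_one] at haa'
  refine haa'.resolve_left fun h => hne ?_
  exact D.eq_of_mem_IwI (hprod ▸ Set.mul_mem_mul h hc) hac

theorem q_wordProd_mul {l : List B} (hl : D.cs.IsReduced l) {u : W} (hu : u ∈ D.Om) :
    D.q (D.cs.wordProd l * u) = (l.map fun b => D.q (D.cs.simple b)).prod := by
  induction l with
  | nil => simpa using D.q_of_mem_Om hu
  | cons b l ih =>
    have hl' : D.cs.IsReduced l := hl.drop 1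
    have hlen : D.cs.length (D.cs.simple b * D.cs.wordProd l) =
        D.cs.length (D.cs.wordProd l) + 1 := by
      rw [← D.cs.wordProd_cons, hl.eq, hl'.eq, List.length_cons]
    have hne : (D.cs.simple b : W) * (D.cs.wordProd l * u) ≠ D.cs.wordProd l * u :=
      fun h => D.coe_simple_ne_one b (mul_eq_right.mp h)
    rw [D.cs.wordProd_cons, Subgroup.coe_mul, mul_assoc,
      D.q_simple_mul (D.IwI_simple_mul_IwI_of_length_eq hlen hu) hne, ih hl', List.map_cons,
      List.prod_cons]

end IwahoriHeckeSetup

/-- If `w ∈ W̃` is written as `w = s₁·s₂⋯s_r·u` with the `s_i` simple reflections, `u ∈ Ω`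
and `r = ℓ(w)` (a reduced decomposition), then `q_w = q_{s₁}·q_{s₂}⋯q_{s_r}`. -/
theorem q_eq_prod_of_reduced {G W B : Type} [Group G] [Group W]
    {M : CoxeterMatrix B} (D : IwahoriHeckeSetup G W B M)
    (w : W) (l : List B) (u : W) (hu : u ∈ D.Om)
    (hw : w = (D.cs.wordProd l : W) * u) (hred : l.length = D.len w) :
    D.q w = (l.map fun b => D.q (D.cs.simple b : W)).prod := by
  have hl : D.cs.IsReduced l := (D.len_spec _ ⟨u, hu⟩).symm.trans (hw ▸ hred).symm
  rw [hw]
  exact D.q_wordProd_mul hl hu
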